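/- arXiv:1501.07157 — 2 statements merged into one kernel-verified Lean document; each statement's English description precedes it below -/
import Mathlib

section
/- Let a₁,a₂,a₃,a₄ > 0 satisfy the quadrilateral inequalities and be elliptic (a₁ ± a₂ ± a₃ ± a₄ ≠ 0 for all signs). Set s = (a₁+a₂+a₃+a₄)/2, āᵢ = s - aᵢ, and m = 1 - (a₁a₂a₃a₄)/(ā₁ā₂ā₃ā₄). Then m ∉ {0, 1}, and m = -s(s-a₂-a₃)(s-a₂-a₄)(s-a₃-a₄)/(ā₁ā₂ā₃ā₄). -/
/-!
The eight numbers (a₁ ± a₂ ± a₃ ± a₄)/2 are exactly s, the three s - aⱼ - aₖ and the four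
āᵢ = s - aᵢ, so ellipticity says that every factor of the numerator and of the denominator of
the fraction for m is nonzero. The formula for m itself is the polynomial identity
ā₁ā₂ā₃ā₄ - a₁a₂a₃a₄ = -s(s - a₂ - a₃)(s - a₂ - a₄)(s - a₃ - a₄).
-/

section SignedSums

variable {R : Type*} [CommRing R] {a₁ a₂ a₃ a₄ s : R}

theorem prod_sub_sub_prod_of_add_eq_two_mul (hs : a₁ + a₂ + a₃ + a₄ = 2 * s) :
    (s - a₁) * (s - a₂) * (s - a₃) * (s - a₄) - a₁ * a₂ * a₃ * a₄ =
      -(s * (s - a₂ - a₃) * (s - a₂ - a₄) * (s - a₃ - a₄)) := by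
  obtain rfl : a₁ = 2 * s - a₂ - a₃ - a₄ := by linear_combination hs
  ring

theorem prod_ne_zero_of_signed_sum_ne_zero [NoZeroDivisors R]
    (hell : ∀ e₂ e₃ e₄ : R, (e₂ = 1 ∨ e₂ = -1) → (e₃ = 1 ∨ e₃ = -1) →
      (e₄ = 1 ∨ e₄ = -1) → a₁ + e₂ * a₂ + e₃ * a₃ + e₄ * a₄ ≠ 0)
    (hs : a₁ + a₂ + a₃ + a₄ = 2 * s) :
    (s - a₁) * (s - a₂) * (s - a₃) * (s - a₄) ≠ 0 ∧
      s * (s - a₂ - a₃) * (s - a₂ - a₄) * (s - a₃ - a₄) ≠ 0 := by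
  refine ⟨mul_ne_zero (mul_ne_zero (mul_ne_zero ?_ ?_) ?_) ?_,
    mul_ne_zero (mul_ne_zero (mul_ne_zero ?_ ?_) ?_) ?_⟩ <;> intro h0
  · exact hell (-1) (-1) (-1) (.inr rfl) (.inr rfl) (.inr rfl) (by linear_combination -2 * h0 - hs)
  · exact hell (-1) 1 1 (.inr rfl) (.inl rfl) (.inl rfl) (by linear_combination 2 * h0 + hs)
  · exact hell 1 (-1) 1 (.inl rfl) (.inr rfl) (.inl rfl) (by linear_combination 2 * h0 + hs)
  · exact hell 1 1 (-1) (.inl rfl) (.inl rfl) (.inr rfl) (by linear_combination 2 * h0 + hs)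
  · exact hell 1 1 1 (.inl rfl) (.inl rfl) (.inl rfl) (by linear_combination 2 * h0 + hs)
  · exact hell (-1) (-1) 1 (.inr rfl) (.inr rfl) (.inl rfl) (by linear_combination 2 * h0 + hs)
  · exact hell (-1) 1 (-1) (.inr rfl) (.inl rfl) (.inr rfl) (by linear_combination 2 * h0 + hs)
  · exact hell 1 (-1) (-1) (.inl rfl) (.inr rfl) (.inr rfl) (by linear_combination 2 * h0 + hs)

end SignedSums

theorem stmt11_general (a₁ a₂ a₃ a₄ : ℝ)
    (h₁ : 0 < a₁) (h₂ : 0 < a₂) (h₃ : 0 < a₃) (h₄ : 0 < a₄)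
    (hell : ∀ e₂ e₃ e₄ : ℝ, (e₂ = 1 ∨ e₂ = -1) → (e₃ = 1 ∨ e₃ = -1) →
      (e₄ = 1 ∨ e₄ = -1) → a₁ + e₂ * a₂ + e₃ * a₃ + e₄ * a₄ ≠ 0) :
    let s := (a₁ + a₂ + a₃ + a₄) / 2
    let m := 1 - a₁ * a₂ * a₃ * a₄ / ((s - a₁) * (s - a₂) * (s - a₃) * (s - a₄))
    m ≠ 0 ∧ m ≠ 1 ∧
      m = -(s * (s - a₂ - a₃) * (s - a₂ - a₄) * (s - a₃ - a₄)) /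
        ((s - a₁) * (s - a₂) * (s - a₃) * (s - a₄)) := by
  intro s m
  have hs : a₁ + a₂ + a₃ + a₄ = 2 * s := by ring
  obtain ⟨hD, hN⟩ := prod_ne_zero_of_signed_sum_ne_zero hell hs
  have hm : m = -(s * (s - a₂ - a₃) * (s - a₂ - a₄) * (s - a₃ - a₄)) /
      ((s - a₁) * (s - a₂) * (s - a₃) * (s - a₄)) := by
    rw [← prod_sub_sub_prod_of_add_eq_two_mul hs, sub_div, div_self hD]
  have hP : a₁ * a₂ * a₃ * a₄ / ((s - a₁) * (s - a₂) * (s - a₃) * (s - a₄)) ≠ 0 :=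
    div_ne_zero (by positivity) hD
  refine ⟨?_, fun h ↦ hP (by linarith), hm⟩
  rw [hm]
  exact div_ne_zero (neg_ne_zero.mpr hN) hD

theorem stmt11 (a₁ a₂ a₃ a₄ : ℝ)
    (h₁ : 0 < a₁) (h₂ : 0 < a₂) (h₃ : 0 < a₃) (h₄ : 0 < a₄)
    (q₁ : a₁ < a₂ + a₃ + a₄) (q₂ : a₂ < a₁ + a₃ + a₄)
    (q₃ : a₃ < a₁ + a₂ + a₄) (q₄ : a₄ < a₁ + a₂ + a₃)
    (hell : ∀ e₂ e₃ e₄ : ℝ, (e₂ = 1 ∨ e₂ = -1) → (e₃ = 1 ∨ e₃ = -1) →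
      (e₄ = 1 ∨ e₄ = -1) → a₁ + e₂ * a₂ + e₃ * a₃ + e₄ * a₄ ≠ 0) :
    let s := (a₁ + a₂ + a₃ + a₄) / 2
    let m := 1 - a₁ * a₂ * a₃ * a₄ / ((s - a₁) * (s - a₂) * (s - a₃) * (s - a₄))
    m ≠ 0 ∧ m ≠ 1 ∧
      m = -(s * (s - a₂ - a₃) * (s - a₂ - a₄) * (s - a₃ - a₄)) /
        ((s - a₁) * (s - a₂) * (s - a₃) * (s - a₄)) :=
  stmt11_general a₁ a₂ a₃ a₄ h₁ h₂ h₃ h₄ hell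
end

section
/- For any reals a,b,c,d with ā = s-a etc. (s = (a+b+c+d)/2): sin a·sin b·sin c·sin d + cos a·cos b·cos c·cos d = sin ā·sin b̄·sin c̄·sin d̄ + cos ā·cos b̄·cos c̄·cos d̄. -/
/-! Expanding products of sines and cosines into sums,
`sin x sin y sin z sin w + cos x cos y cos z cos w` depends only on `cos (x ∓ y)` and
`cos (z ∓ w)`. The substitution `x ↦ s - x` negates `a - b` and `c - d` and exchanges
`a + b` with `c + d`, so it leaves that expression unchanged. -/

open Real

lemma sin_mul_sin_mul_sin_mul_sin_add_cos_mul_cos_mul_cos_mul_cos (x y z w : ℝ) :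
    sin x * sin y * sin z * sin w + cos x * cos y * cos z * cos w =
      (cos (x - y) * cos (z - w) + cos (x + y) * cos (z + w)) / 2 := by
  rw [cos_sub, cos_sub, cos_add, cos_add]
  ring

theorem stmt18 (a b c d : ℝ) (s : ℝ) (hs : s = (a + b + c + d) / 2) :
    Real.sin a * Real.sin b * Real.sin c * Real.sin d +
        Real.cos a * Real.cos b * Real.cos c * Real.cos d =
      Real.sin (s - a) * Real.sin (s - b) * Real.sin (s - c) * Real.sin (s - d) +
        Real.cos (s - a) * Real.cos (s - b) * Real.cos (s - c) * Real.cos (s - d) := by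
  subst hs
  rw [sin_mul_sin_mul_sin_mul_sin_add_cos_mul_cos_mul_cos_mul_cos,
    sin_mul_sin_mul_sin_mul_sin_add_cos_mul_cos_mul_cos_mul_cos,
    ← cos_neg (a - b), ← cos_neg (c - d), mul_comm (cos (a + b))]
  congr 4 <;> ring
end
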